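/- arXiv:2202.05353 — 2 statements merged into one kernel-verified Lean document; each statement's English description precedes it below -/
import Mathlib

section
/- Let Ω be closed and convex, x ∈ Ω, g ∈ ℝⁿ. The map α ↦ ‖P_Ω(x − αg) − x‖ is nondecreasing on (0, ∞), and the map α ↦ ‖P_Ω(x − αg) − x‖/α is nonincreasing on (0, ∞). -/
/-!
Write `u = P α - x` and `v = P β - x`. The variational inequalities of the two projections,
tested against each other's projection and weighted by `β` and `α`, make the `g`-terms cancel
and leave `β ‖u‖² + α ‖v‖² ≤ (α + β) ⟪u, v⟫ ≤ (α + β) ‖u‖ ‖v‖`, i.e.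
`(‖v‖ - ‖u‖) (β ‖u‖ - α ‖v‖) ≥ 0`. For `α ≤ β` both factors must then be nonnegative.
-/

open scoped RealInnerProductSpace

section Projection

variable {E : Type*} [NormedAddCommGroup E] [InnerProductSpace ℝ E]

theorem inner_sub_le_zero_of_forall_norm_sub_le {s : Set E} (hs : Convex ℝ s) {z p : E}
    (hp : p ∈ s) (hmin : ∀ y ∈ s, ‖z - p‖ ≤ ‖z - y‖) : ∀ w ∈ s, ⟪z - p, w - p⟫ ≤ 0 := by
  have : Nonempty s := ⟨⟨p, hp⟩⟩
  refine (norm_eq_iInf_iff_real_inner_le_zero hs hp).1 (le_antisymm ?_ ?_)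
  · exact le_ciInf fun w => hmin w w.2
  · have hbdd : BddBelow (Set.range fun w : s => ‖z - w‖) :=
      ⟨0, Set.forall_mem_range.2 fun _ => norm_nonneg _⟩
    exact ciInf_le hbdd ⟨p, hp⟩

theorem mul_norm_sq_add_mul_norm_sq_le_of_inner_le_zero {x g p q : E} {α β : ℝ}
    (hα : 0 ≤ α) (hβ : 0 ≤ β) (hp : ⟪x - α • g - p, q - p⟫ ≤ 0)
    (hq : ⟪x - β • g - q, p - q⟫ ≤ 0) :
    β * ‖p - x‖ ^ 2 + α * ‖q - x‖ ^ 2 ≤ (α + β) * ‖p - x‖ * ‖q - x‖ := by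
  have hcombine : β * ⟪x - α • g - p, q - p⟫ + α * ⟪x - β • g - q, p - q⟫ =
      β * ‖p - x‖ ^ 2 + α * ‖q - x‖ ^ 2 - (α + β) * ⟪p - x, q - x⟫ := by
    have hxp : x - α • g - p = -(p - x) - α • g := by abel
    have hxq : x - β • g - q = -(q - x) - β • g := by abel
    have hqp : q - p = (q - x) - (p - x) := by abel
    have hpq : p - q = (p - x) - (q - x) := by abel
    rw [hxp, hxq, hqp, hpq]
    generalize p - x = u
    generalize q - x = v
    simp only [inner_sub_left, inner_sub_right, inner_neg_left, real_inner_smul_left,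
      real_inner_self_eq_norm_sq, real_inner_comm u v]
    ring
  have hweighted : β * ⟪x - α • g - p, q - p⟫ + α * ⟪x - β • g - q, p - q⟫ ≤ 0 :=
    add_nonpos (mul_nonpos_of_nonneg_of_nonpos hβ hp) (mul_nonpos_of_nonneg_of_nonpos hα hq)
  calc β * ‖p - x‖ ^ 2 + α * ‖q - x‖ ^ 2 ≤ (α + β) * ⟪p - x, q - x⟫ := by linarith
    _ ≤ (α + β) * (‖p - x‖ * ‖q - x‖) := by gcongr; exact real_inner_le_norm _ _
    _ = (α + β) * ‖p - x‖ * ‖q - x‖ := by ring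

end Projection

theorem le_and_div_le_div_of_mul_sq_add_mul_sq_le {a b α β : ℝ} (ha : 0 ≤ a)
    (hα : 0 < α) (hαβ : α ≤ β) (h : β * a ^ 2 + α * b ^ 2 ≤ (α + β) * a * b) :
    a ≤ b ∧ b / β ≤ a / α := by
  have hβ : 0 < β := hα.trans_le hαβ
  have hfactor : 0 ≤ (b - a) * (β * a - α * b) := by nlinarith
  refine ⟨?_, ?_⟩
  · by_contra! hba
    have : 0 < β * a - α * b := by nlinarith
    nlinarith [mul_neg_of_neg_of_pos (sub_neg.2 hba) this]
  · rw [div_le_div_iff₀ hβ hα]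
    by_contra! hlt
    have : a < b := by nlinarith
    nlinarith [mul_neg_of_pos_of_neg (sub_pos.2 this) (by linarith : β * a - α * b < 0)]

theorem proj_step_monotone_general (n : ℕ) (Ω : Set (EuclideanSpace ℝ (Fin n)))
    (hconv : Convex ℝ Ω)
    (x : EuclideanSpace ℝ (Fin n))
    (g : EuclideanSpace ℝ (Fin n))
    (P : ℝ → EuclideanSpace ℝ (Fin n))
    (hP : ∀ α : ℝ, P α ∈ Ω ∧ ∀ y ∈ Ω, ‖x - α • g - P α‖ ≤ ‖x - α • g - y‖) :
    ∀ α β : ℝ, 0 < α → α ≤ β →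
      ‖P α - x‖ ≤ ‖P β - x‖ ∧ ‖P β - x‖ / β ≤ ‖P α - x‖ / α := by
  intro α β hα hαβ
  have hvi (γ : ℝ) := inner_sub_le_zero_of_forall_norm_sub_le hconv (hP γ).1 (hP γ).2
  exact le_and_div_le_div_of_mul_sq_add_mul_sq_le (norm_nonneg _) hα hαβ
    (mul_norm_sq_add_mul_norm_sq_le_of_inner_le_zero hα.le (hα.trans_le hαβ).le
      (hvi α _ (hP β).1) (hvi β _ (hP α).1))

/-- The map `α ↦ ‖P_Ω(x - αg) - x‖` is nondecreasing on `(0,∞)` and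
`α ↦ ‖P_Ω(x - αg) - x‖/α` is nonincreasing on `(0,∞)`. -/
theorem proj_step_monotone (n : ℕ) (Ω : Set (EuclideanSpace ℝ (Fin n)))
    (hclosed : IsClosed Ω) (hconv : Convex ℝ Ω)
    (x : EuclideanSpace ℝ (Fin n)) (hx : x ∈ Ω)
    (g : EuclideanSpace ℝ (Fin n))
    (P : ℝ → EuclideanSpace ℝ (Fin n))
    (hP : ∀ α : ℝ, P α ∈ Ω ∧ ∀ y ∈ Ω, ‖x - α • g - P α‖ ≤ ‖x - α • g - y‖) :
    ∀ α β : ℝ, 0 < α → α ≤ β →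
      ‖P α - x‖ ≤ ‖P β - x‖ ∧ ‖P β - x‖ / β ≤ ‖P α - x‖ / α :=
  proj_step_monotone_general n Ω hconv x g P hP
end

section
/- Let f : ℝⁿ → ℝ be differentiable, Ω closed convex, x ∈ Ω, d = P_Ω(x − αg) − x with g = ∇f(x), α > 0, and d ≠ 0. Suppose ∇f is Lipschitz continuous with constant L. Then for δ ∈ (0,1), the Armijo condition f(x + s d) ≤ f(x) + s δ ⟨∇f(x), d⟩ holds for all s ∈ (0, min{1, 2(1−δ)/(αL)}]. -/
open scoped RealInnerProductSpace

/-!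
The variational inequality of the projection `p` of `x - α∇f(x)` onto `Ω`, tested at `x ∈ Ω`,
gives `‖d‖² + α⟪∇f(x), d⟫ ≤ 0` for `d = p - x`. The descent lemma for an `L`-Lipschitz gradient
bounds `f(x + s d)` by `f(x) + s⟪∇f(x), d⟫ + L s² ‖d‖² / 2`, and for `s α L ≤ 2(1 - δ)` the
quadratic term is absorbed by the fraction `(1 - δ)` of the linear one.
-/

section ProjectionInequality

variable {F : Type*} [NormedAddCommGroup F] [InnerProductSpace ℝ F]

theorem inner_sub_le_zero_of_forall_norm_sub_le_s16 {K : Set F} (hK : Convex ℝ K) {z p x : F}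
    (hp : p ∈ K) (hmin : ∀ y ∈ K, ‖z - p‖ ≤ ‖z - y‖) (hx : x ∈ K) :
    ⟪z - p, x - p⟫ ≤ 0 := by
  have : Nonempty K := ⟨⟨p, hp⟩⟩
  have hbdd : BddBelow (Set.range fun y : K => ‖z - y‖) :=
    ⟨0, by rintro _ ⟨y, rfl⟩; exact norm_nonneg _⟩
  have hinf : ‖z - p‖ = ⨅ y : K, ‖z - y‖ :=
    le_antisymm (le_ciInf fun y => hmin y y.2) (ciInf_le hbdd ⟨p, hp⟩)
  exact (norm_eq_iInf_iff_real_inner_le_zero hK hp).mp hinf x hx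

theorem norm_sq_add_inner_le_zero_of_forall_norm_sub_le {K : Set F} (hK : Convex ℝ K)
    {x g p : F} {α : ℝ} (hx : x ∈ K) (hp : p ∈ K)
    (hmin : ∀ y ∈ K, ‖x - α • g - p‖ ≤ ‖x - α • g - y‖) :
    ‖p - x‖ ^ 2 + α * ⟪g, p - x⟫ ≤ 0 := by
  have h := inner_sub_le_zero_of_forall_norm_sub_le_s16 hK hp hmin hx
  have hsplit : x - α • g - p = -(p - x) - α • g := by abel
  have hxp : x - p = -(p - x) := by abel
  rw [hsplit, hxp, inner_sub_left, inner_neg_neg, real_inner_self_eq_norm_sq,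
    inner_neg_right, real_inner_smul_left] at h
  linarith

end ProjectionInequality

section DescentLemma

variable {F : Type*} [NormedAddCommGroup F] [InnerProductSpace ℝ F] [CompleteSpace F]
  {f : F → ℝ}

theorem hasDerivAt_comp_add_smul (hf : Differentiable ℝ f) (x d : F) (t : ℝ) :
    HasDerivAt (fun t : ℝ => f (x + t • d)) ⟪gradient f (x + t • d), d⟫ t := by
  have hline : HasDerivAt (fun t : ℝ => x + t • d) d t := by
    simpa using ((hasDerivAt_id t).smul_const d).const_add x
  have h := (hf (x + t • d)).hasFDerivAt.comp_hasDerivAt t hline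
  rwa [(hf (x + t • d)).hasGradientAt.hasFDerivAt.fderiv,
    InnerProductSpace.toDual_apply_apply] at h

theorem inner_gradient_sub_le {L : ℝ}
    (hLip : ∀ u v, ‖gradient f u - gradient f v‖ ≤ L * ‖u - v‖)
    (x d : F) {t : ℝ} (ht : 0 ≤ t) :
    ⟪gradient f (x + t • d) - gradient f x, d⟫ ≤ L * t * ‖d‖ ^ 2 :=
  calc ⟪gradient f (x + t • d) - gradient f x, d⟫
      ≤ ‖gradient f (x + t • d) - gradient f x‖ * ‖d‖ := real_inner_le_norm _ _
    _ ≤ L * ‖x + t • d - x‖ * ‖d‖ := by gcongr; exact hLip _ _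
    _ = L * t * ‖d‖ ^ 2 := by
      rw [add_sub_cancel_left, norm_smul, Real.norm_of_nonneg ht]; ring

theorem le_add_inner_gradient_add_sq_of_lipschitz (hf : Differentiable ℝ f) {L : ℝ}
    (hLip : ∀ u v, ‖gradient f u - gradient f v‖ ≤ L * ‖u - v‖)
    (x d : F) {s : ℝ} (hs : 0 ≤ s) :
    f (x + s • d) ≤ f x + s * ⟪gradient f x, d⟫ + L * s ^ 2 * ‖d‖ ^ 2 / 2 := by
  set C := ⟪gradient f x, d⟫
  set K := L * ‖d‖ ^ 2
  -- the gap between `f` on the ray and its quadratic upper model has nonpositive derivative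
  let φ : ℝ → ℝ := fun t => f (x + t • d) - t * C - K * t ^ 2 / 2
  have hφ : ∀ t, HasDerivAt φ (⟪gradient f (x + t • d), d⟫ - C - K * t) t := by
    intro t
    have hquad : HasDerivAt (fun t : ℝ => K * t ^ 2 / 2) (K * t) t :=
      (((hasDerivAt_pow 2 t).const_mul K).div_const 2).congr_deriv (by ring)
    exact ((hasDerivAt_comp_add_smul hf x d t).sub
      ((hasDerivAt_id t).mul_const C)).sub hquad |>.congr_deriv (by ring)
  have hanti : AntitoneOn φ (Set.Ici 0) := by
    refine antitoneOn_of_deriv_nonpos (convex_Ici 0)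
      (fun t _ => (hφ t).continuousAt.continuousWithinAt)
      (fun t _ => (hφ t).differentiableAt.differentiableWithinAt) fun t ht => ?_
    rw [interior_Ici] at ht
    have h := inner_gradient_sub_le hLip x d (le_of_lt ht)
    rw [inner_sub_left] at h
    rw [(hφ t).deriv]
    linarith
  have h := hanti Set.self_mem_Ici hs hs
  simp only [φ, zero_smul, add_zero] at h
  linarith

end DescentLemma

theorem armijo_of_quadratic_bound {a C α L s δ : ℝ} (hα : 0 < α) (hs : 0 ≤ s) (hδ : δ ≤ 1)
    (hdir : a + α * C ≤ 0) (hstep : s * (α * L) ≤ 2 * (1 - δ)) (ha : 0 ≤ a) :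
    s * C + L * s ^ 2 * a / 2 ≤ s * δ * C := by
  have hdir' : s * (1 - δ) * (a + α * C) ≤ 0 :=
    mul_nonpos_of_nonneg_of_nonpos (by nlinarith) hdir
  have hstep' : s * (α * L) * (s * a) ≤ 2 * (1 - δ) * (s * a) :=
    mul_le_mul_of_nonneg_right hstep (by positivity)
  have hscaled : α * (s * C + L * s ^ 2 * a / 2 - s * δ * C) ≤ 0 := by nlinarith
  nlinarith [(mul_nonpos_iff_pos_imp_nonpos.mp hscaled).1 hα]

theorem armijo_holds_general (n : ℕ) (Ω : Set (EuclideanSpace ℝ (Fin n)))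
    (hconv : Convex ℝ Ω)
    (f : EuclideanSpace ℝ (Fin n) → ℝ) (hf : Differentiable ℝ f)
    (L : ℝ) (hLip : ∀ u v, ‖gradient f u - gradient f v‖ ≤ L * ‖u - v‖)
    (x : EuclideanSpace ℝ (Fin n)) (hx : x ∈ Ω)
    (α : ℝ) (hα : 0 < α)
    (p : EuclideanSpace ℝ (Fin n)) (hp : p ∈ Ω)
    (hpmin : ∀ y ∈ Ω,
      ‖x - α • gradient f x - p‖ ≤ ‖x - α • gradient f x - y‖)
    (δ : ℝ) (hδ : δ ∈ Set.Ioo (0 : ℝ) 1) :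
    ∀ s : ℝ, 0 < s → s ≤ min 1 (2 * (1 - δ) / (α * L)) →
      f (x + s • (p - x)) ≤ f x + s * δ * ⟪gradient f x, p - x⟫ := by
  intro s hs hsle
  have hstep : s * (α * L) ≤ 2 * (1 - δ) := by
    rcases lt_or_ge 0 (α * L) with hαL | hαL
    · exact (le_div_iff₀ hαL).mp (hsle.trans (min_le_right _ _))
    · nlinarith [hδ.2]
  have hdir := norm_sq_add_inner_le_zero_of_forall_norm_sub_le hconv hx hp hpmin
  have hdescent := le_add_inner_gradient_add_sq_of_lipschitz hf hLip x (p - x) hs.le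
  have harmijo := armijo_of_quadratic_bound hα hs.le hδ.2.le hdir hstep (by positivity)
  linarith

/-- If `∇f` is `L`-Lipschitz, `d = P_Ω(x - α∇f(x)) - x ≠ 0`, and
`δ ∈ (0,1)`, then the Armijo condition holds for all stepsizes
`s ∈ (0, min{1, 2(1-δ)/(αL)}]`. -/
theorem armijo_holds (n : ℕ) (Ω : Set (EuclideanSpace ℝ (Fin n)))
    (hclosed : IsClosed Ω) (hconv : Convex ℝ Ω)
    (f : EuclideanSpace ℝ (Fin n) → ℝ) (hf : Differentiable ℝ f)
    (L : ℝ) (hLip : ∀ u v, ‖gradient f u - gradient f v‖ ≤ L * ‖u - v‖)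
    (x : EuclideanSpace ℝ (Fin n)) (hx : x ∈ Ω)
    (α : ℝ) (hα : 0 < α)
    (p : EuclideanSpace ℝ (Fin n)) (hp : p ∈ Ω)
    (hpmin : ∀ y ∈ Ω,
      ‖x - α • gradient f x - p‖ ≤ ‖x - α • gradient f x - y‖)
    (hd : p - x ≠ 0) (δ : ℝ) (hδ : δ ∈ Set.Ioo (0 : ℝ) 1) :
    ∀ s : ℝ, 0 < s → s ≤ min 1 (2 * (1 - δ) / (α * L)) →
      f (x + s • (p - x)) ≤ f x + s * δ * ⟪gradient f x, p - x⟫ :=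
  armijo_holds_general n Ω hconv f hf L hLip x hx α hα p hp hpmin δ hδ
end
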